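/- If (w, c, α²) is a non-trivial solution of the Taylor–Goldstein eigenvalue problem with c_i > 0, then the integral relation ∫_{z₁}^{z₂} (|w″|² + 2α²|w′|² + α⁴|w|²) dz − ∫_{z₁}^{z₂} (U″)²/((U − c_r)² + c_i²) |w|² dz + 2 ∫_{z₁}^{z₂} gβ U″ (U − c_r)/((U − c_r)² + c_i²)² |w|² dz − ∫_{z₁}^{z₂} g²β²/((U − c_r)² + c_i²)² |w|² dz = 0 holds (Lemma 3.2, relation (3.8)). -/

import Mathlib

/-!
The Taylor–Goldstein equation says `w″ − α²w = (U″/(U − c) − gβ/(U − c)²) w`; take squared moduli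
and integrate. On the left, `|w″ − α²w|² = |w″|² + α⁴|w|² − 2α² Re(w″ w̄)`, and
`Re(w″ w̄) + |w′|²` is the derivative of `Re(w′ w̄)`, which vanishes at both ends because of the
boundary conditions; so the cross term integrates to `2α² ∫ |w′|²`. On the right,
`|U″/ζ − gβ/ζ²|² = |U″ζ − gβ|² / |ζ|⁴` with `ζ = U − c` expands into the three remaining
integrands.
-/

open Set ComplexConjugate

namespace Complex

theorem sq_norm_sub_ofReal_mul (x y : ℂ) (t : ℝ) :
    ‖x - t * y‖ ^ 2 = ‖x‖ ^ 2 + t ^ 2 * ‖y‖ ^ 2 - 2 * t * (x * conj y).re := by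
  simp only [Complex.sq_norm, normSq_sub, normSq_ofReal, map_mul, conj_ofReal]
  rw [mul_left_comm, re_ofReal_mul]
  ring

theorem normSq_ofReal_sub (x : ℝ) (c : ℂ) :
    normSq (x - c) = (x - c.re) ^ 2 + c.im ^ 2 := by
  simp [normSq_apply]; ring

theorem sq_norm_div_sub_div_sq (u b : ℝ) {ζ : ℂ} (hζ : ζ ≠ 0) :
    ‖(u : ℂ) / ζ - b / ζ ^ 2‖ ^ 2
      = u ^ 2 / normSq ζ - 2 * (b * u * ζ.re / normSq ζ ^ 2) + b ^ 2 / normSq ζ ^ 2 := by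
  have hN : normSq ζ ≠ 0 := (normSq_pos.mpr hζ).ne'
  rw [show (u : ℂ) / ζ - b / ζ ^ 2 = (u * ζ - b) / ζ ^ 2 by field_simp, Complex.sq_norm,
    normSq_div, map_pow, normSq_sub, normSq_mul, normSq_ofReal, normSq_ofReal, conj_ofReal,
    re_mul_ofReal, re_ofReal_mul]
  field_simp
  ring

end Complex

theorem integral_re_mul_conj_add_sq_norm_eq_zero {a b : ℝ} {w w' w'' : ℝ → ℂ}
    (hw : ∀ x ∈ uIcc a b, HasDerivAt w (w' x) x)
    (hw' : ∀ x ∈ uIcc a b, HasDerivAt w' (w'' x) x)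
    (hw'' : ContinuousOn w'' (uIcc a b)) (ha : w a = 0) (hb : w b = 0) :
    ∫ x in a..b, ((w'' x * conj (w x)).re + ‖w' x‖ ^ 2) = 0 := by
  have hderiv : ∀ x ∈ uIcc a b, HasDerivAt (fun x ↦ (w' x * conj (w x)).re)
      ((w'' x * conj (w x)).re + ‖w' x‖ ^ 2) x := by
    intro x hx
    have h : HasDerivAt (fun x ↦ w' x * conj (w x))
        (w'' x * conj (w x) + w' x * conj (w' x)) x := (hw' x hx).mul (hw x hx).star
    have := Complex.reCLM.hasFDerivAt.comp_hasDerivAt x h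
    rwa [Complex.reCLM_apply, Complex.add_re, Complex.mul_conj, Complex.ofReal_re,
      ← Complex.sq_norm] at this
  have hcont : ContinuousOn (fun x ↦ (w'' x * conj (w x)).re + ‖w' x‖ ^ 2) (uIcc a b) := by
    have hwc := HasDerivAt.continuousOn hw
    have hw'c := HasDerivAt.continuousOn hw'
    fun_prop
  rw [intervalIntegral.integral_eq_sub_of_hasDerivAt hderiv hcont.intervalIntegrable, ha, hb]
  simp

theorem taylor_goldstein_sq_norm_eq (α U U'' g β : ℝ) {c : ℂ} (hc : c.im ≠ 0)
    (w w'' : ℂ)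
    (h : w'' - (α : ℂ) ^ 2 * w - ((U'' : ℂ) / ((U : ℂ) - c)) * w
        + ((g : ℂ) * (β : ℂ) / ((U : ℂ) - c) ^ 2) * w = 0) :
    ‖w''‖ ^ 2 + α ^ 4 * ‖w‖ ^ 2 - 2 * α ^ 2 * (w'' * conj w).re
      = U'' ^ 2 / ((U - c.re) ^ 2 + c.im ^ 2) * ‖w‖ ^ 2
        - 2 * (g * β * U'' * (U - c.re) / ((U - c.re) ^ 2 + c.im ^ 2) ^ 2 * ‖w‖ ^ 2)
        + g ^ 2 * β ^ 2 / ((U - c.re) ^ 2 + c.im ^ 2) ^ 2 * ‖w‖ ^ 2 := by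
  have hζ : (U : ℂ) - c ≠ 0 := fun h0 ↦ hc (by simpa using congrArg Complex.im h0)
  have hfactor : w'' - (α ^ 2 : ℝ) * w
      = ((U'' : ℂ) / (U - c) - ((g * β : ℝ) : ℂ) / (U - c) ^ 2) * w := by
    push_cast
    linear_combination h
  calc ‖w''‖ ^ 2 + α ^ 4 * ‖w‖ ^ 2 - 2 * α ^ 2 * (w'' * conj w).re
      = ‖w'' - (α ^ 2 : ℝ) * w‖ ^ 2 := by rw [Complex.sq_norm_sub_ofReal_mul]; ring
    _ = ‖((U'' : ℂ) / (U - c) - ((g * β : ℝ) : ℂ) / (U - c) ^ 2) * w‖ ^ 2 := by rw [hfactor]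
    _ = _ := by
      rw [norm_mul, mul_pow, Complex.sq_norm_div_sub_div_sq _ _ hζ, Complex.normSq_ofReal_sub,
        Complex.sub_re, Complex.ofReal_re]
      ring

theorem taylor_goldstein_relation_3_8_general
    (z₁ z₂ : ℝ) (hz : z₁ < z₂)
    (g : ℝ)
    (U U' U'' : ℝ → ℝ)
    (hU : ∀ z ∈ Icc z₁ z₂, HasDerivAt U (U' z) z)
    (hU'' : ContinuousOn U'' (Icc z₁ z₂))
    (β : ℝ → ℝ) (hβc : ContinuousOn β (Icc z₁ z₂))
    (α : ℝ)
    (c : ℂ) (hci : 0 < c.im)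
    (w w' w'' : ℝ → ℂ)
    (hw : ∀ z ∈ Icc z₁ z₂, HasDerivAt w (w' z) z)
    (hw' : ∀ z ∈ Icc z₁ z₂, HasDerivAt w' (w'' z) z)
    (hw'' : ContinuousOn w'' (Icc z₁ z₂))
    (hbc₁ : w z₁ = 0) (hbc₂ : w z₂ = 0)
    (heq : ∀ z ∈ Icc z₁ z₂,
      w'' z - (α : ℂ) ^ 2 * w z - ((U'' z : ℂ) / ((U z : ℂ) - c)) * w z
        + ((g : ℂ) * (β z : ℂ) / ((U z : ℂ) - c) ^ 2) * w z = 0) :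
    (∫ z in z₁..z₂,
        (‖w'' z‖ ^ 2 + 2 * α ^ 2 * ‖w' z‖ ^ 2 + α ^ 4 * ‖w z‖ ^ 2))
      - (∫ z in z₁..z₂,
          (U'' z) ^ 2 / ((U z - c.re) ^ 2 + c.im ^ 2) * ‖w z‖ ^ 2)
      + 2 * (∫ z in z₁..z₂,
          g * β z * U'' z * (U z - c.re)
            / ((U z - c.re) ^ 2 + c.im ^ 2) ^ 2 * ‖w z‖ ^ 2)
      - (∫ z in z₁..z₂,
          g ^ 2 * (β z) ^ 2 / ((U z - c.re) ^ 2 + c.im ^ 2) ^ 2 * ‖w z‖ ^ 2)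
      = 0 := by
  rw [← uIcc_of_le hz.le] at hU hU'' hβc hw hw' hw'' heq
  have hUc := HasDerivAt.continuousOn hU
  have hwc := HasDerivAt.continuousOn hw
  have hw'c := HasDerivAt.continuousOn hw'
  rw [← intervalIntegral.integral_sub, ← intervalIntegral.integral_const_mul,
    ← intervalIntegral.integral_add, ← intervalIntegral.integral_sub]
  · calc _ = ∫ z in z₁..z₂, 2 * α ^ 2 * ((w'' z * conj (w z)).re + ‖w' z‖ ^ 2) := by
          refine intervalIntegral.integral_congr fun z hz ↦ ?_
          linear_combination taylor_goldstein_sq_norm_eq α (U z) (U'' z) g (β z) hci.ne'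
            (w z) (w'' z) (heq z hz)
      _ = 0 := by
          rw [intervalIntegral.integral_const_mul,
            integral_re_mul_conj_add_sq_norm_eq_zero hw hw' hw'' hbc₁ hbc₂, mul_zero]
  all_goals exact ContinuousOn.intervalIntegrable (by fun_prop (disch := intros; positivity))

/-- Lemma 3.2, relation (3.8). -/
theorem taylor_goldstein_relation_3_8
    (z₁ z₂ : ℝ) (hz : z₁ < z₂)
    (g : ℝ) (hg : 0 < g)
    (U U' U'' : ℝ → ℝ)
    (hU : ∀ z ∈ Icc z₁ z₂, HasDerivAt U (U' z) z)
    (hU' : ∀ z ∈ Icc z₁ z₂, HasDerivAt U' (U'' z) z)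
    (hU'' : ContinuousOn U'' (Icc z₁ z₂))
    (β : ℝ → ℝ) (hβc : ContinuousOn β (Icc z₁ z₂))
    (hβ : ∀ z ∈ Icc z₁ z₂, 0 ≤ β z)
    (α : ℝ) (hα : 0 < α)
    (c : ℂ) (hci : 0 < c.im)
    (w w' w'' : ℝ → ℂ)
    (hw : ∀ z ∈ Icc z₁ z₂, HasDerivAt w (w' z) z)
    (hw' : ∀ z ∈ Icc z₁ z₂, HasDerivAt w' (w'' z) z)
    (hw'' : ContinuousOn w'' (Icc z₁ z₂))
    (hw0 : ∃ z ∈ Icc z₁ z₂, w z ≠ 0)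
    (hbc₁ : w z₁ = 0) (hbc₂ : w z₂ = 0)
    (heq : ∀ z ∈ Icc z₁ z₂,
      w'' z - (α : ℂ) ^ 2 * w z - ((U'' z : ℂ) / ((U z : ℂ) - c)) * w z
        + ((g : ℂ) * (β z : ℂ) / ((U z : ℂ) - c) ^ 2) * w z = 0) :
    (∫ z in z₁..z₂,
        (‖w'' z‖ ^ 2 + 2 * α ^ 2 * ‖w' z‖ ^ 2 + α ^ 4 * ‖w z‖ ^ 2))
      - (∫ z in z₁..z₂,
          (U'' z) ^ 2 / ((U z - c.re) ^ 2 + c.im ^ 2) * ‖w z‖ ^ 2)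
      + 2 * (∫ z in z₁..z₂,
          g * β z * U'' z * (U z - c.re)
            / ((U z - c.re) ^ 2 + c.im ^ 2) ^ 2 * ‖w z‖ ^ 2)
      - (∫ z in z₁..z₂,
          g ^ 2 * (β z) ^ 2 / ((U z - c.re) ^ 2 + c.im ^ 2) ^ 2 * ‖w z‖ ^ 2)
      = 0 :=
  taylor_goldstein_relation_3_8_general z₁ z₂ hz g U U' U'' hU hU'' β hβc α c hci w w' w'' hw hw'
    hw'' hbc₁ hbc₂ heq
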